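/- arXiv:2107.13915 — 4 statements merged into one kernel-verified Lean document; each statement's English description precedes it below -/
import Mathlib

section
/- The field of straightedge-and-compass constructible real numbers is real quadratically closed but not real closed. -/
/-- The field of straightedge-and-compass constructible real numbers:
the smallest subfield of `ℝ` closed under taking square roots of positive elements. -/
noncomputable def ConstructibleReals : Subfield ℝ :=
  sInf {K : Subfield ℝ | ∀ x ∈ K, 0 < x → Real.sqrt x ∈ K}

/-!
Every constructible real lies in a tower `ℚ = L₀ ⊆ L₁ ⊆ ⋯ ⊆ Lₙ ⊆ ℝ` in which each `Lᵢ₊₁` is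
generated over `Lᵢ` by a square root: such towers are stable under composita, so their union is
a subfield closed under square roots. Each step has degree `1` or `2`, so the minimal polynomial
of a constructible real has degree a power of `2`, whereas the real cube root of `2` has minimal
polynomial `X ^ 3 - 2`.
-/

open Polynomial Module IntermediateField

namespace IntermediateField

variable {F E : Type*} [Field F] [Field E] [Algebra F E]

theorem natDegree_minpoly_le_two_of_sq_mem {K : IntermediateField F E} {a : E}
    (ha : a ^ 2 ∈ K) : IsIntegral K a ∧ (minpoly K a).natDegree ≤ 2 := by
  set p : K[X] := X ^ 2 - C ⟨a ^ 2, ha⟩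
  have hp : aeval a p = 0 := by simp [p]
  refine ⟨⟨p, monic_X_pow_sub_C _ two_ne_zero, hp⟩, ?_⟩
  rw [← natDegree_X_pow_sub_C (n := 2) (r := (⟨a ^ 2, ha⟩ : K))]
  exact natDegree_le_natDegree (minpoly.min K a (monic_X_pow_sub_C _ two_ne_zero) hp)

inductive IsQuadraticTower : IntermediateField F E → Prop
  | bot : IsQuadraticTower ⊥
  | adjoin_sqrt {L : IntermediateField F E} {a : E} :
      IsQuadraticTower L → a ^ 2 ∈ L → IsQuadraticTower (L ⊔ F⟮a⟯)

namespace IsQuadraticTower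

theorem sup {L₁ L₂ : IntermediateField F E} (h₁ : IsQuadraticTower L₁)
    (h₂ : IsQuadraticTower L₂) : IsQuadraticTower (L₁ ⊔ L₂) := by
  induction h₂ with
  | bot => simpa using h₁
  | adjoin_sqrt _ ha ih =>
    rw [← sup_assoc]
    exact ih.adjoin_sqrt (le_sup_right (a := L₁) ha)

theorem exists_finrank_eq_two_pow {L : IntermediateField F E} (h : IsQuadraticTower L) :
    ∃ n, finrank F L = 2 ^ n := by
  induction h with
  | bot => exact ⟨0, by simp⟩
  | @adjoin_sqrt L a _ ha ih =>
    obtain ⟨n, hn⟩ := ih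
    have : FiniteDimensional F L := Module.finite_of_finrank_pos (by rw [hn]; positivity)
    obtain ⟨hint, hle⟩ := natDegree_minpoly_le_two_of_sq_mem ha
    have : FiniteDimensional L L⟮a⟯ := adjoin.finiteDimensional hint
    have : Module.Free L L⟮a⟯ := Module.Free.of_divisionRing L L⟮a⟯
    have hpos := minpoly.natDegree_pos hint
    have hmul : finrank F (restrictScalars F L⟮a⟯) = finrank F L * finrank L L⟮a⟯ :=
      (finrank_mul_finrank F L L⟮a⟯).symm
    rw [← restrictScalars_adjoin_eq_sup, hmul, hn, adjoin.finrank hint]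
    interval_cases (minpoly L a).natDegree
    · exact ⟨n, mul_one _⟩
    · exact ⟨n + 1, (pow_succ 2 n).symm⟩

theorem exists_natDegree_minpoly_eq_two_pow {L : IntermediateField F E}
    (h : IsQuadraticTower L) {x : E} (hx : x ∈ L) : ∃ n, (minpoly F x).natDegree = 2 ^ n := by
  obtain ⟨n, hn⟩ := h.exists_finrank_eq_two_pow
  have : FiniteDimensional F L := Module.finite_of_finrank_pos (by rw [hn]; positivity)
  have hint : IsIntegral F x := (IsIntegral.of_finite F (⟨x, hx⟩ : L)).map L.val
  have hdvd := finrank_dvd_of_le_right (adjoin_simple_le_iff.mpr hx)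
  rw [adjoin.finrank hint, hn] at hdvd
  obtain ⟨k, -, hk⟩ := (Nat.dvd_prime_pow Nat.prime_two).mp hdvd
  exact ⟨k, hk⟩

end IsQuadraticTower

variable (F E) in
def quadraticTowerUnion : IntermediateField F E where
  carrier := {x | ∃ L : IntermediateField F E, IsQuadraticTower L ∧ x ∈ L}
  algebraMap_mem' r := ⟨⊥, .bot, algebraMap_mem ⊥ r⟩
  add_mem' := by
    rintro x y ⟨L₁, h₁, hx⟩ ⟨L₂, h₂, hy⟩
    exact ⟨L₁ ⊔ L₂, h₁.sup h₂, add_mem (le_sup_left (b := L₂) hx) (le_sup_right (a := L₁) hy)⟩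
  mul_mem' := by
    rintro x y ⟨L₁, h₁, hx⟩ ⟨L₂, h₂, hy⟩
    exact ⟨L₁ ⊔ L₂, h₁.sup h₂, mul_mem (le_sup_left (b := L₂) hx) (le_sup_right (a := L₁) hy)⟩
  inv_mem' := by
    rintro x ⟨L, h, hx⟩
    exact ⟨L, h, inv_mem hx⟩

theorem mem_quadraticTowerUnion_of_sq_mem {a : E} (ha : a ^ 2 ∈ quadraticTowerUnion F E) :
    a ∈ quadraticTowerUnion F E := by
  obtain ⟨L, hL, haL⟩ := ha
  exact ⟨L ⊔ F⟮a⟯, hL.adjoin_sqrt haL, le_sup_right (a := L) (mem_adjoin_simple_self F a)⟩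

theorem exists_natDegree_minpoly_eq_two_pow_of_mem_quadraticTowerUnion {x : E}
    (hx : x ∈ quadraticTowerUnion F E) : ∃ n, (minpoly F x).natDegree = 2 ^ n := by
  obtain ⟨L, hL, hxL⟩ := hx
  exact hL.exists_natDegree_minpoly_eq_two_pow hxL

end IntermediateField

theorem Real.sqrt_mem_constructibleReals {x : ℝ} (hx : x ∈ ConstructibleReals) (hpos : 0 < x) :
    √x ∈ ConstructibleReals :=
  Subfield.mem_sInf.mpr fun K hK => hK x (Subfield.mem_sInf.mp hx K hK) hpos

theorem constructibleReals_le_quadraticTowerUnion :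
    ConstructibleReals ≤ (quadraticTowerUnion ℚ ℝ).toSubfield :=
  sInf_le fun x hx hpos =>
    mem_quadraticTowerUnion_of_sq_mem (by rwa [Real.sq_sqrt hpos.le])

theorem Rat.pow_three_ne_two (b : ℚ) : b ^ 3 ≠ 2 := by
  intro hb
  have h3 : padicValRat 2 (b ^ 3) = 3 * padicValRat 2 b := padicValRat.pow b
  have h1 : padicValRat 2 (b ^ 3) = 1 := by rw [hb]; exact_mod_cast padicValRat.self one_lt_two
  omega

theorem minpoly_rat_eq_X_pow_three_sub_two {c : ℝ} (hc : c ^ 3 = 2) :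
    minpoly ℚ c = X ^ 3 - C 2 :=
  (minpoly.eq_of_irreducible_of_monic
    (X_pow_sub_C_irreducible_of_prime Nat.prime_three Rat.pow_three_ne_two)
    (by simp [hc]) (monic_X_pow_sub_C _ three_ne_zero)).symm

theorem notMem_constructibleReals_of_pow_three_eq_two {c : ℝ} (hc : c ^ 3 = 2) :
    c ∉ ConstructibleReals := fun hmem => by
  obtain ⟨n, hn⟩ := exists_natDegree_minpoly_eq_two_pow_of_mem_quadraticTowerUnion
    (constructibleReals_le_quadraticTowerUnion hmem)
  rw [minpoly_rat_eq_X_pow_three_sub_two hc, natDegree_X_pow_sub_C] at hn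
  have : 3 ∣ 2 := Nat.prime_three.dvd_of_dvd_pow (n := n) (hn ▸ dvd_rfl)
  omega

/-- The field of constructible real numbers is real quadratically closed
(every positive element has a square root) but not real closed
(some odd degree polynomial has no root). -/
theorem constructibleReals_realQuadraticallyClosed_not_realClosed :
    (∀ x : ConstructibleReals, 0 < x → ∃ y : ConstructibleReals, y ^ 2 = x) ∧
    ¬ (∀ p : Polynomial ConstructibleReals, Odd p.natDegree →
        ∃ r : ConstructibleReals, p.eval r = 0) := by
  constructor
  · intro x hx
    exact ⟨⟨√x, Real.sqrt_mem_constructibleReals x.2 hx⟩, Subtype.ext (Real.sq_sqrt hx.le)⟩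
  · intro h
    obtain ⟨r, hr⟩ := h (X ^ 3 - C 2) (by rw [natDegree_X_pow_sub_C]; decide)
    rw [eval_sub, eval_pow, eval_X, eval_C, sub_eq_zero] at hr
    exact notMem_constructibleReals_of_pow_three_eq_two (congrArg Subtype.val hr) r.2
end

section
/- For a field F with at least 4 elements, the map λ from the pre-Bloch group P(F) to S²_ℤ(F^×) sending [x] to (1−x)∘x is a well-defined group homomorphism; that is, λ vanishes on each five-term relation R_{x,y}. -/
open scoped TensorProduct

variable (F : Type) [Field F]

/-- `S²_ℤ(F^×)`: the quotient of `F^× ⊗_ℤ F^×` by the subgroup generated by the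
elements `x ⊗ y + y ⊗ x`. -/
abbrev SymSq :=
  (Additive Fˣ ⊗[ℤ] Additive Fˣ) ⧸
    Submodule.span ℤ {t : Additive Fˣ ⊗[ℤ] Additive Fˣ |
      ∃ a b : Additive Fˣ, t = a ⊗ₜ[ℤ] b + b ⊗ₜ[ℤ] a}

/-- `x ∘ y`, the image of `x ⊗ y` in `S²_ℤ(F^×)`. -/
noncomputable def symb (x y : Fˣ) : SymSq F :=
  Submodule.Quotient.mk (Additive.ofMul x ⊗ₜ[ℤ] Additive.ofMul y)

/-- The lift of the map `λ : [x] ↦ (1-x) ∘ x` to the free abelian group on `F`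
(the generators of the pre-Bloch group `P(F)`). -/
noncomputable def lamFree [DecidableEq F] : (F →₀ ℤ) →ₗ[ℤ] SymSq F :=
  Finsupp.lsum ℤ fun x =>
    LinearMap.toSpanSingleton ℤ (SymSq F)
      (if h : x = 0 then 0 else if h1 : x = 1 then 0 else
        symb F (Units.mk0 (1 - x) (sub_ne_zero.mpr (Ne.symm h1))) (Units.mk0 x h))

/-! Every argument `z` of the five-term relation, and its complement `1 - z`, is a monomial in
the units `x, y, 1 - x, 1 - y, x - y`. Expanding the five symbols `(1 - z) ∘ z` bilinearly in
these units, everything cancels except `(1-x)∘x + x∘(1-x) - x∘(1-y) - (1-y)∘x`, which vanishes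
in `S²_ℤ(F^×)`. -/

section Symb

variable {F}

lemma symb_mul_left (a b c : Fˣ) : symb F (a * b) c = symb F a c + symb F b c := by
  rw [symb, symb, symb, ofMul_mul, TensorProduct.add_tmul, Submodule.Quotient.mk_add]

lemma symb_mul_right (a b c : Fˣ) : symb F a (b * c) = symb F a b + symb F a c := by
  rw [symb, symb, symb, ofMul_mul, TensorProduct.tmul_add, Submodule.Quotient.mk_add]

lemma symb_one_left (c : Fˣ) : symb F 1 c = 0 := by
  rw [symb, ofMul_one, TensorProduct.zero_tmul, Submodule.Quotient.mk_zero]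

lemma symb_one_right (c : Fˣ) : symb F c 1 = 0 := by
  rw [symb, ofMul_one, TensorProduct.tmul_zero, Submodule.Quotient.mk_zero]

lemma symb_inv_left (a c : Fˣ) : symb F a⁻¹ c = -symb F a c := by
  rw [eq_neg_iff_add_eq_zero, ← symb_mul_left, inv_mul_cancel, symb_one_left]

lemma symb_inv_right (a c : Fˣ) : symb F a c⁻¹ = -symb F a c := by
  rw [eq_neg_iff_add_eq_zero, ← symb_mul_right, inv_mul_cancel, symb_one_right]

lemma symb_add_symb_swap (a b : Fˣ) : symb F a b + symb F b a = 0 := by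
  rw [symb, symb, ← Submodule.Quotient.mk_add, Submodule.Quotient.mk_eq_zero]
  exact Submodule.subset_span ⟨Additive.ofMul a, Additive.ofMul b, rfl⟩

lemma symb_swap (a b : Fˣ) : symb F a b = -symb F b a :=
  eq_neg_of_add_eq_zero_left (symb_add_symb_swap a b)

/-- Holds for arbitrary units; it is applied with `s = 1 - x`, `t = 1 - y`, `d = x - y`. -/
lemma symb_five_term (x y s t d : Fˣ) :
    symb F s x - symb F t y + symb F (d * x⁻¹) (y * x⁻¹)
      - symb F (d * x⁻¹ * t⁻¹) (s * y * x⁻¹ * t⁻¹) + symb F (d * t⁻¹) (s * t⁻¹) = 0 := by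
  simp only [symb_mul_left, symb_mul_right, symb_inv_left, symb_inv_right]
  rw [symb_swap x s, symb_swap t x]
  abel

end Symb

lemma lamFree_single_eq_symb [DecidableEq F] {z : F} (u w : Fˣ) (hu : (u : F) = 1 - z)
    (hw : (w : F) = z) : lamFree F (Finsupp.single z 1) = symb F u w := by
  subst hw
  have h1 : (w : F) ≠ 1 := fun h => u.ne_zero (by rw [hu, h, sub_self])
  simp only [lamFree, Finsupp.lsum_single, LinearMap.toSpanSingleton_apply, one_smul,
    w.ne_zero, h1, dite_false]
  congr <;> ext <;> simp [hu]

theorem lam_vanishes_on_fiveTermRelations [DecidableEq F]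
    (x y : F) (hx0 : x ≠ 0) (hx1 : x ≠ 1) (hy0 : y ≠ 0) (hy1 : y ≠ 1) (hxy : x ≠ y) :
    lamFree F
      (Finsupp.single x 1 - Finsupp.single y 1 + Finsupp.single (y / x) 1
        - Finsupp.single ((1 - x⁻¹) / (1 - y⁻¹)) 1
        + Finsupp.single ((1 - x) / (1 - y)) 1) = 0 := by
  have hs : 1 - x ≠ 0 := sub_ne_zero.mpr hx1.symm
  have ht : 1 - y ≠ 0 := sub_ne_zero.mpr hy1.symm
  have hd : x - y ≠ 0 := sub_ne_zero.mpr hxy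
  set X := Units.mk0 x hx0
  set Y := Units.mk0 y hy0
  set S := Units.mk0 (1 - x) hs
  set T := Units.mk0 (1 - y) ht
  set D := Units.mk0 (x - y) hd
  simp only [map_add, map_sub]
  rw [lamFree_single_eq_symb F S X rfl rfl, lamFree_single_eq_symb F T Y rfl rfl,
    lamFree_single_eq_symb F (D * X⁻¹) (Y * X⁻¹) (by simp [X, D]; field_simp)
      (by simp [X, Y, div_eq_mul_inv]),
    lamFree_single_eq_symb F (D * X⁻¹ * T⁻¹) (S * Y * X⁻¹ * T⁻¹)
      (by simp [X, T, D]; field_simp; ring) (by simp [X, Y, S, T]; field_simp; ring),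
    lamFree_single_eq_symb F (D * T⁻¹) (S * T⁻¹) (by simp [T, D]; field_simp; ring)
      (by simp [S, T, div_eq_mul_inv])]
  exact symb_five_term X Y S T D
end

section
/- In the refined pre-Bloch group RP(F) of a field F, the elements ψ_i (i = 1,2) satisfy the cocycle identity ψ_i(xy) = ⟨x⟩ψ_i(y) + ψ_i(x) for all x, y ∈ F^×. -/
open scoped Classical

variable (F : Type) [Field F]

/-- The subgroup of squares in `F^×`. -/
def sqSubgroup : Subgroup Fˣ := MonoidHom.range (powMonoidHom 2 : Fˣ →* Fˣ)

/-- The square class group `F^×/(F^×)²`. -/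
def SqClassGroup : Type := Fˣ ⧸ sqSubgroup F

instance : CommGroup (SqClassGroup F) := inferInstanceAs (CommGroup (Fˣ ⧸ sqSubgroup F))

/-- The group ring `R_F = ℤ[F^×/(F^×)²]`. -/
abbrev GrpRing := MonoidAlgebra ℤ (SqClassGroup F)

/-- `⟨x⟩ ∈ R_F`, the square class of `x ∈ F^×` (with the junk convention `⟨0⟩ = 1`). -/
noncomputable def cls (x : F) : GrpRing F :=
  if h : x = 0 then 1
  else MonoidAlgebra.of ℤ (SqClassGroup F)
    (QuotientGroup.mk (Units.mk0 x h) : Fˣ ⧸ sqSubgroup F)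

/-- The relators of the refined pre-Bloch group: `[0]`, `[1]` and the refined five-term
relators `S_{x,y}`, inside the free `R_F`-module on the set `F` of generator labels. -/
noncomputable def refinedRels : Set (F →₀ GrpRing F) :=
  {Finsupp.single (0 : F) 1, Finsupp.single (1 : F) 1} ∪
  {z | ∃ x y : F, x ≠ 0 ∧ x ≠ 1 ∧ y ≠ 0 ∧ y ≠ 1 ∧ x ≠ y ∧
    z = Finsupp.single x 1 - Finsupp.single y 1
        + Finsupp.single (y / x) (cls F x)
        - Finsupp.single ((1 - x⁻¹) / (1 - y⁻¹)) (cls F (x⁻¹ - 1))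
        + Finsupp.single ((1 - x) / (1 - y)) (cls F (1 - x))}

/-- The refined pre-Bloch group `RP(F)`: the `R_F`-module with generators `[x]`, `x ∈ F^×`,
subject to `[1] = 0` and the refined five-term relations `S_{x,y}`. -/
abbrev RP := (F →₀ GrpRing F) ⧸ Submodule.span (GrpRing F) (refinedRels F)

/-- The generator `[x]` of `RP(F)`. -/
noncomputable def gen (x : F) : RP F :=
  Submodule.Quotient.mk (Finsupp.single x 1)

/-- `ψ₁(x) = [x] + ⟨-1⟩[x⁻¹]`. -/
noncomputable def psi1 (x : F) : RP F := gen F x + cls F (-1) • gen F x⁻¹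

/-- `ψ₂(x) = ⟨x⁻¹-1⟩[x] + ⟨1-x⟩[x⁻¹]` for `x ≠ 1`, and `ψ₂(1) = 0`. -/
noncomputable def psi2 (x : F) : RP F :=
  if x = 1 then 0 else cls F (x⁻¹ - 1) • gen F x + cls F (1 - x) • gen F x⁻¹

/-! Adding the five-term relations `S_{x,y}` and `⟨-1⟩ S_{x⁻¹,y⁻¹}` gives
`ψ₁(y) = ⟨x⟩ ψ₁(y/x) + ψ₁(x)`. For `ψ₂`, write `ψ₂(x) = ⟨x⁻¹-1⟩ φ(x)` with
`φ(x) = [x] + ⟨x⟩[x⁻¹]`: then `S_{X,Y} + S_{Y,X}` is a three-term relation between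
values of `φ`, which for a suitable choice of `X, Y` expresses `φ(xy)` through `φ(x)` and
`φ(y)`, and the square-class factors turn it into the cocycle identity.

This settles the cases where none of `x, y, xy` is `1`. The cases `x = 1`, `y = 1` are
trivial, and `xy = 1` follows from the generic case by expanding `f(z)` along
`z = x · (x⁻¹z)` for an auxiliary `z ∉ {0, 1, x}`, which exists because `F` has at least
four elements. -/

variable {F}

def SqClassGroup.mk : Fˣ →* SqClassGroup F := QuotientGroup.mk' (sqSubgroup F)

lemma SqClassGroup.mk_sq (u : Fˣ) : SqClassGroup.mk (u ^ 2) = 1 :=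
  (QuotientGroup.eq_one_iff _).2 ⟨u, rfl⟩

lemma cls_of_ne_zero {x : F} (hx : x ≠ 0) :
    cls F x = MonoidAlgebra.of ℤ (SqClassGroup F) (SqClassGroup.mk (Units.mk0 x hx)) :=
  dif_neg hx

lemma cls_mul {x y : F} (hx : x ≠ 0) (hy : y ≠ 0) :
    cls F (x * y) = cls F x * cls F y := by
  rw [cls_of_ne_zero (mul_ne_zero hx hy), cls_of_ne_zero hx, cls_of_ne_zero hy, ← map_mul,
    ← map_mul]
  congr 2
  ext
  simp

lemma cls_sq (x : F) : cls F (x ^ 2) = 1 := by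
  by_cases hx : x = 0
  · simp [cls, hx]
  have hsq : Units.mk0 (x ^ 2) (pow_ne_zero 2 hx) = Units.mk0 x hx ^ 2 := by ext; simp
  rw [cls_of_ne_zero (pow_ne_zero 2 hx), hsq, SqClassGroup.mk_sq, map_one]

lemma cls_mul_sq (t : F) {r : F} (hr : r ≠ 0) : cls F (t * r ^ 2) = cls F t := by
  by_cases ht : t = 0
  · simp [ht]
  · rw [cls_mul ht (pow_ne_zero 2 hr), cls_sq, mul_one]

lemma cls_mul_self (x : F) : cls F x * cls F x = 1 := by
  by_cases hx : x = 0
  · simp [cls, hx]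
  · rw [← cls_mul hx hx, ← sq, cls_sq]

lemma cls_one : cls F (1 : F) = 1 := by
  simpa using cls_sq (1 : F)

lemma cls_inv (x : F) : cls F x⁻¹ = cls F x := by
  by_cases hx : x = 0
  · simp [hx]
  · rw [← cls_mul_sq x (inv_ne_zero hx)]
    congr 1
    field_simp

lemma cls_mul_cls_eq {a b c r : F} (ha : a ≠ 0) (hb : b ≠ 0) (hr : r ≠ 0)
    (h : a * b = c * r ^ 2) : cls F a * cls F b = cls F c := by
  rw [← cls_mul ha hb, h, cls_mul_sq _ hr]

lemma gen_one : gen F 1 = 0 := by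
  rw [gen, Submodule.Quotient.mk_eq_zero]
  exact Submodule.subset_span (Set.mem_union_left _ (by simp))

lemma gen_five_term {x y : F} (hx0 : x ≠ 0) (hx1 : x ≠ 1) (hy0 : y ≠ 0) (hy1 : y ≠ 1)
    (hxy : x ≠ y) :
    gen F x - gen F y + cls F x • gen F (y / x)
      - cls F (x⁻¹ - 1) • gen F ((1 - x⁻¹) / (1 - y⁻¹))
      + cls F (1 - x) • gen F ((1 - x) / (1 - y)) = 0 := by
  have hmem : Finsupp.single x 1 - Finsupp.single y 1 + Finsupp.single (y / x) (cls F x)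
      - Finsupp.single ((1 - x⁻¹) / (1 - y⁻¹)) (cls F (x⁻¹ - 1))
      + Finsupp.single ((1 - x) / (1 - y)) (cls F (1 - x))
      ∈ Submodule.span (GrpRing F) (refinedRels F) :=
    Submodule.subset_span (Set.mem_union_right _ ⟨x, y, hx0, hx1, hy0, hy1, hxy, rfl⟩)
  have hsingle (t : F) (c : GrpRing F) : Finsupp.single t c = c • Finsupp.single t 1 := by
    rw [Finsupp.smul_single, smul_eq_mul, mul_one]
  rw [hsingle (y / x), hsingle ((1 - x⁻¹) / (1 - y⁻¹)), hsingle ((1 - x) / (1 - y))] at hmem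
  simpa only [gen, Submodule.Quotient.mk_add, Submodule.Quotient.mk_sub,
    Submodule.Quotient.mk_smul] using (Submodule.Quotient.mk_eq_zero _).2 hmem

lemma psi1_eq_cls_smul_psi1_div_add {x y : F} (hx0 : x ≠ 0) (hx1 : x ≠ 1) (hy0 : y ≠ 0)
    (hy1 : y ≠ 1) (hxy : x ≠ y) :
    psi1 F y = cls F x • psi1 F (y / x) + psi1 F x := by
  have hS := gen_five_term hx0 hx1 hy0 hy1 hxy
  have hS' := gen_five_term (inv_ne_zero hx0) (inv_ne_one.2 hx1) (inv_ne_zero hy0)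
    (inv_ne_one.2 hy1) (inv_injective.ne hxy)
  have hxic : 1 - x⁻¹ ≠ 0 := sub_ne_zero.2 (inv_ne_one.2 hx1).symm
  have e1 : cls F (-1) * cls F (x - 1) = cls F (1 - x) :=
    cls_mul_cls_eq (neg_ne_zero.2 one_ne_zero) (sub_ne_zero.2 hx1) one_ne_zero (by ring)
  have e2 : cls F (-1) * cls F (1 - x⁻¹) = cls F (x⁻¹ - 1) :=
    cls_mul_cls_eq (neg_ne_zero.2 one_ne_zero) hxic one_ne_zero (by ring)
  have hS'' := congrArg (cls F (-1) • ·) hS'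
  simp only [inv_inv, inv_div_inv, cls_inv, smul_add, smul_sub, smul_smul, e1, e2,
    smul_zero] at hS''
  rw [psi1, psi1, psi1, inv_div]
  linear_combination (norm := module) -hS - hS''

noncomputable def phi (x : F) : RP F := gen F x + cls F x • gen F x⁻¹

lemma psi2_eq_cls_smul_phi {x : F} (hx0 : x ≠ 0) (hx1 : x ≠ 1) :
    psi2 F x = cls F (x⁻¹ - 1) • phi x := by
  have hx1' : x⁻¹ - 1 ≠ 0 := sub_ne_zero.2 (inv_ne_one.2 hx1)
  rw [psi2, if_neg hx1, phi, smul_add, smul_smul,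
    cls_mul_cls_eq (c := 1 - x) hx1' hx0 one_ne_zero (by field_simp)]

lemma smul_gen_add_smul_gen_inv {a b t : F} (h : cls F b = cls F a * cls F t) :
    cls F a • gen F t + cls F b • gen F t⁻¹ = cls F a • phi t := by
  rw [phi, smul_add, smul_smul, h]

lemma phi_five_term {X Y : F} (hX0 : X ≠ 0) (hX1 : X ≠ 1) (hY0 : Y ≠ 0) (hY1 : Y ≠ 1)
    (hXY : X ≠ Y) :
    cls F (X⁻¹ - 1) • phi ((1 - X⁻¹) / (1 - Y⁻¹))
      = cls F X • phi (Y / X) + cls F (1 - X) • phi ((1 - X) / (1 - Y)) := by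
  have hXi : X⁻¹ - 1 ≠ 0 := sub_ne_zero.2 (inv_ne_one.2 hX1)
  have hYi : Y⁻¹ - 1 ≠ 0 := sub_ne_zero.2 (inv_ne_one.2 hY1)
  have hXc : 1 - X ≠ 0 := sub_ne_zero.2 hX1.symm
  have hYc : 1 - Y ≠ 0 := sub_ne_zero.2 hY1.symm
  have h1 := gen_five_term hX0 hX1 hY0 hY1 hXY
  have h2 := gen_five_term hY0 hY1 hX0 hX1 hXY.symm
  have p1 := smul_gen_add_smul_gen_inv (F := F) (a := X) (b := Y) (t := Y / X) (by
    rw [← cls_mul hX0 (div_ne_zero hY0 hX0), mul_div_cancel₀ _ hX0])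
  have p2 := smul_gen_add_smul_gen_inv (F := F) (a := X⁻¹ - 1) (b := Y⁻¹ - 1)
    (t := (1 - X⁻¹) / (1 - Y⁻¹)) (by
      refine (cls_mul_cls_eq hXi (div_ne_zero (neg_sub X⁻¹ 1 ▸ neg_ne_zero.2 hXi)
        (neg_sub Y⁻¹ 1 ▸ neg_ne_zero.2 hYi)) (div_ne_zero hXi hYi) ?_).symm
      field_simp
      ring)
  have p3 := smul_gen_add_smul_gen_inv (F := F) (a := 1 - X) (b := 1 - Y)
    (t := (1 - X) / (1 - Y)) (by
      refine (cls_mul_cls_eq hXc (div_ne_zero hXc hYc) (div_ne_zero hXc hYc) ?_).symm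
      field_simp)
  rw [inv_div] at p1 p2 p3
  linear_combination (norm := module) p1 - p2 + p3 - h1 - h2

/-- `phi_five_term` at `X = (y-1)/(xy-1)` and `Y = xX`, chosen so that `Y/X = x`,
`(1-X⁻¹)/(1-Y⁻¹) = xy` and `(1-X)/(1-Y) = y`. -/
lemma phi_mul {x y : F} (hx0 : x ≠ 0) (hx1 : x ≠ 1) (hy0 : y ≠ 0) (hy1 : y ≠ 1)
    (hxy1 : x * y ≠ 1) :
    phi (x * y) = cls F (1 - (y - 1) / (x * y - 1)) • phi x
      + cls F ((y - 1) / (x * y - 1)) • phi y := by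
  have hx1' : x - 1 ≠ 0 := sub_ne_zero.2 hx1
  have hy1' : y - 1 ≠ 0 := sub_ne_zero.2 hy1
  have hxy1' : x * y - 1 ≠ 0 := sub_ne_zero.2 hxy1
  set X := (y - 1) / (x * y - 1) with hX
  have hX0 : X ≠ 0 := div_ne_zero hy1' hxy1'
  have hX1 : X ≠ 1 := by
    rw [hX, Ne, div_eq_one_iff_eq hxy1']
    intro h
    exact hx1 (mul_right_cancel₀ hy0 (by linear_combination -h))
  have hXY : X ≠ x * X := fun h => hx1 (mul_right_cancel₀ hX0 (by linear_combination -h))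
  have hY1 : x * X ≠ 1 := by
    rw [hX, ← mul_div_assoc, Ne, div_eq_one_iff_eq hxy1']
    intro h
    exact hx1 (by linear_combination -h)
  have h := phi_five_term hX0 hX1 (mul_ne_zero hx0 hX0) hY1 hXY
  have ha : x * X / X = x := mul_div_cancel_right₀ x hX0
  have hXc_eq : 1 - X = y * (x - 1) / (x * y - 1) := by
    rw [hX, eq_div_iff hxy1', sub_mul, div_mul_cancel₀ _ hxy1']
    ring
  have hYc_eq : 1 - x * X = (x - 1) / (x * y - 1) := by
    rw [hX, ← mul_div_assoc, eq_div_iff hxy1', sub_mul, div_mul_cancel₀ _ hxy1']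
    ring
  have hXic_eq : 1 - X⁻¹ = y * (1 - x) / (y - 1) := by rw [hX]; field_simp; ring
  have hYic_eq : 1 - (x * X)⁻¹ = (1 - x) / (x * (y - 1)) := by rw [hX]; field_simp; ring
  have hb : (1 - X⁻¹) / (1 - (x * X)⁻¹) = x * y := by
    rw [hXic_eq, hYic_eq]
    field_simp [sub_ne_zero.2 hx1.symm]
  have hc : (1 - X) / (1 - x * X) = y := by
    rw [hXc_eq, hYc_eq, div_div_div_cancel_right₀ hxy1', mul_div_assoc, div_self hx1', mul_one]
  have hXi : X⁻¹ - 1 ≠ 0 := sub_ne_zero.2 (inv_ne_one.2 hX1)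
  have hXc : 1 - X ≠ 0 := sub_ne_zero.2 hX1.symm
  have e1 : cls F (X⁻¹ - 1) * cls F X = cls F (1 - X) :=
    cls_mul_cls_eq hXi hX0 one_ne_zero (by field_simp)
  have e2 : cls F (X⁻¹ - 1) * cls F (1 - X) = cls F X :=
    cls_mul_cls_eq (r := (1 - X) / X) hXi hXc (div_ne_zero hXc hX0) (by field_simp)
  rw [ha, hb, hc] at h
  simpa only [smul_add, smul_smul, cls_mul_self, one_smul, e1, e2] using
    congrArg (cls F (X⁻¹ - 1) • ·) h

lemma psi2_mul {x y : F} (hx0 : x ≠ 0) (hx1 : x ≠ 1) (hy0 : y ≠ 0) (hy1 : y ≠ 1)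
    (hxy1 : x * y ≠ 1) :
    psi2 F (x * y) = cls F x • psi2 F y + psi2 F x := by
  have hx1' : x - 1 ≠ 0 := sub_ne_zero.2 hx1
  have hy1' : y - 1 ≠ 0 := sub_ne_zero.2 hy1
  have hxy1' : x * y - 1 ≠ 0 := sub_ne_zero.2 hxy1
  have hxyi : (x * y)⁻¹ - 1 ≠ 0 := sub_ne_zero.2 (inv_ne_one.2 hxy1)
  have hyi : y⁻¹ - 1 ≠ 0 := sub_ne_zero.2 (inv_ne_one.2 hy1)
  have e1 : cls F ((x * y)⁻¹ - 1) * cls F (1 - (y - 1) / (x * y - 1)) = cls F (x⁻¹ - 1) := by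
    refine cls_mul_cls_eq hxyi ?_ one_ne_zero ?_
    · rw [one_sub_div hxy1']
      refine div_ne_zero ?_ hxy1'
      rw [show x * y - 1 - (y - 1) = y * (x - 1) by ring]
      exact mul_ne_zero hy0 hx1'
    · field_simp
      ring
  have e2 : cls F ((x * y)⁻¹ - 1) * cls F ((y - 1) / (x * y - 1))
      = cls F x * cls F (y⁻¹ - 1) := by
    rw [← cls_mul hx0 hyi]
    refine cls_mul_cls_eq hxyi (div_ne_zero hy1' hxy1') (inv_ne_zero hx0) ?_
    field_simp
    ring
  rw [psi2_eq_cls_smul_phi (mul_ne_zero hx0 hy0) hxy1, psi2_eq_cls_smul_phi hy0 hy1,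
    psi2_eq_cls_smul_phi hx0 hx1, phi_mul hx0 hx1 hy0 hy1 hxy1, smul_add, smul_smul, smul_smul,
    e1, e2, mul_smul, add_comm]

lemma exists_ne_zero_ne_one_ne {α : Type*} [Zero α] [One α] (h4 : ∃ s : Finset α, 4 ≤ s.card)
    (x : α) : ∃ z : α, z ≠ 0 ∧ z ≠ 1 ∧ z ≠ x := by
  obtain ⟨s, hs⟩ := h4
  obtain ⟨z, -, hz⟩ := Finset.exists_mem_notMem_of_card_lt_card
    ((Finset.card_le_three (a := 0) (b := 1) (c := x)).trans_lt hs)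
  simp only [Finset.mem_insert, Finset.mem_singleton, not_or] at hz
  exact ⟨z, hz⟩

section CocycleExtension

variable {M : Type*} [AddCommGroup M] [Module (GrpRing F) M]

def IsGenericCocycle (f : F → M) : Prop :=
  ∀ ⦃x y : F⦄, x ≠ 0 → x ≠ 1 → y ≠ 0 → y ≠ 1 → x * y ≠ 1 →
    f (x * y) = cls F x • f y + f x

lemma IsGenericCocycle.cls_smul_inv_add {f : F → M} (hf : IsGenericCocycle f) {x z : F}
    (hx0 : x ≠ 0) (hx1 : x ≠ 1) (hz0 : z ≠ 0) (hz1 : z ≠ 1) (hzx : z ≠ x) :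
    cls F x • f x⁻¹ + f x = 0 := by
  have hxz0 : x⁻¹ * z ≠ 0 := mul_ne_zero (inv_ne_zero hx0) hz0
  have hxz1 : x⁻¹ * z ≠ 1 := by
    rw [Ne, inv_mul_eq_one₀ hx0]
    exact hzx.symm
  have h1 := hf hx0 hx1 hxz0 hxz1 (by rwa [mul_inv_cancel_left₀ hx0])
  rw [mul_inv_cancel_left₀ hx0, hf (inv_ne_zero hx0) (inv_ne_one.2 hx1) hz0 hz1 hxz1, smul_add,
    smul_smul, cls_inv, cls_mul_self, one_smul, add_assoc] at h1
  exact left_eq_add.mp h1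

lemma IsGenericCocycle.map_mul {f : F → M} (hf : IsGenericCocycle f) (hf1 : f 1 = 0)
    (h4 : ∃ s : Finset F, 4 ≤ s.card) {x y : F} (hx0 : x ≠ 0) (hy0 : y ≠ 0) :
    f (x * y) = cls F x • f y + f x := by
  rcases eq_or_ne x 1 with rfl | hx1
  · rw [one_mul, cls_one, one_smul, hf1, add_zero]
  rcases eq_or_ne y 1 with rfl | hy1
  · rw [mul_one, hf1, smul_zero, zero_add]
  rcases eq_or_ne (x * y) 1 with hxy1 | hxy1
  · obtain ⟨z, hz0, hz1, hzx⟩ := exists_ne_zero_ne_one_ne h4 x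
    rw [hxy1, hf1, eq_inv_of_mul_eq_one_right hxy1]
    exact (hf.cls_smul_inv_add hx0 hx1 hz0 hz1 hzx).symm
  · exact hf hx0 hx1 hy0 hy1 hxy1

end CocycleExtension

lemma isGenericCocycle_psi1 : IsGenericCocycle (psi1 F) := by
  intro x y hx0 hx1 hy0 hy1 hxy1
  have hxxy : x ≠ x * y := fun h => hy1 (mul_left_cancel₀ hx0 (by rw [mul_one, ← h])).symm
  simpa only [mul_div_cancel_left₀ y hx0] using
    psi1_eq_cls_smul_psi1_div_add hx0 hx1 (mul_ne_zero hx0 hy0) hxy1 hxxy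

lemma isGenericCocycle_psi2 : IsGenericCocycle (psi2 F) :=
  fun _ _ hx0 hx1 hy0 hy1 hxy1 => psi2_mul hx0 hx1 hy0 hy1 hxy1

lemma psi1_one : psi1 F 1 = 0 := by
  rw [psi1, inv_one, gen_one, smul_zero, add_zero]

lemma psi2_one : psi2 F 1 = 0 := if_pos rfl

variable (F)

/-- In the refined pre-Bloch group `RP(F)` of a field `F` with at least 4 elements,
the elements `ψᵢ` (i = 1,2) satisfy the cocycle identity
`ψᵢ(xy) = ⟨x⟩ψᵢ(y) + ψᵢ(x)` for all `x, y ∈ F^×`. -/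
theorem psi_cocycle (h4 : ∃ s : Finset F, 4 ≤ s.card)
    (x y : F) (hx : x ≠ 0) (hy : y ≠ 0) :
    psi1 F (x * y) = cls F x • psi1 F y + psi1 F x ∧
    psi2 F (x * y) = cls F x • psi2 F y + psi2 F x :=
  ⟨isGenericCocycle_psi1.map_mul psi1_one h4 hx hy,
    isGenericCocycle_psi2.map_mul psi2_one h4 hx hy⟩
end

section
/- For a real quadratically closed field R, the Milnor K-group K_n^M(R) decomposes as the direct sum of the subgroup generated by the symbol {−1, …, −1} and the subgroup K_n^M(R)^0 generated by symbols {x₁, …, x_n} with all x_i > 0, and K_n^M(R)^0 is 2-divisible; moreover K_n^M(R)^0 = 2·K_n^M(R). -/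
variable (R : Type) [Field R] [LinearOrder R] [IsStrictOrderedRing R]

/-- The Steinberg relation on the tensor algebra `T(R^×)` over `ℤ`: the generators
`a ⊗ (1-a)` of the defining ideal of Milnor K-theory are identified with `0`. -/
def steinbergRel (a b : TensorAlgebra ℤ (Additive Rˣ)) : Prop :=
  ∃ u v : Rˣ, (u : R) + (v : R) = 1 ∧
    a = TensorAlgebra.ι ℤ (Additive.ofMul u) * TensorAlgebra.ι ℤ (Additive.ofMul v) ∧
    b = 0

/-- The Milnor K-theory ring `K_•^M(R) = T(R^×)/J`. -/
abbrev MilnorKRing := RingQuot (steinbergRel R)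

/-- The symbol `{a₁, …, aₙ}`, the image of `a₁ ⊗ ⋯ ⊗ aₙ` in `K_n^M(R)`. -/
noncomputable def milnorSymbol {n : ℕ} (f : Fin n → Rˣ) : MilnorKRing R :=
  RingQuot.mkRingHom (steinbergRel R)
    (List.ofFn fun i => TensorAlgebra.ι ℤ (Additive.ofMul (f i))).prod

/-- `K_n^M(R)`, the subgroup generated by all `n`-fold symbols. -/
noncomputable def MilnorK (n : ℕ) : AddSubgroup (MilnorKRing R) :=
  AddSubgroup.closure {z | ∃ f : Fin n → Rˣ, z = milnorSymbol R f}

/-- The subgroup generated by the symbol `{-1, …, -1}`. -/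
noncomputable def MilnorKNegOne (n : ℕ) : AddSubgroup (MilnorKRing R) :=
  AddSubgroup.closure {milnorSymbol R (fun _ : Fin n => -1)}

/-- `K_n^M(R)⁰`, the subgroup generated by symbols `{x₁, …, xₙ}` with all `xᵢ > 0`. -/
noncomputable def MilnorKPos (n : ℕ) : AddSubgroup (MilnorKRing R) :=
  AddSubgroup.closure
    {z | ∃ f : Fin n → Rˣ, (∀ i, (0 : R) < (f i : R)) ∧ z = milnorSymbol R f}

/-!
Since `{a, -a} = 0`, Milnor K-theory is graded-anticommutative and `{-1, a} = {a, a}`. Splitting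
each unit as `±` a positive one and trading every `-1` next to a positive entry for a positive
entry with these identities, every symbol lies in `ℤ{-1, …, -1} + K_n^M(R)⁰`. The ring map
`K_•^M(R) → ℤ/2` induced by `a ↦ [a < 0]` kills `K_n^M(R)⁰` for `n ≥ 1` and sends
`{-1, …, -1}` to `1`, while `2{-1, …, -1} = {1, -1, …} = 0`: the sum is direct.
Finally, if `x₁ = q²` then `{x₁, …} = 2{q, …}`, so `K_n^M(R)⁰` is 2-divisible, and it equals
`2 K_n^M(R)` because `2` kills the other summand.
-/

theorem AddSubgroup.mul_mem_of_mem_closure {A : Type*} [NonUnitalNonAssocRing A] {S : Set A}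
    {K : AddSubgroup A} {c z : A} (hS : ∀ s ∈ S, c * s ∈ K) (hz : z ∈ AddSubgroup.closure S) :
    c * z ∈ K :=
  (AddSubgroup.closure_le (K.comap (AddMonoidHom.mulLeft c))).2 hS hz

section

variable {F : Type} [Field F]

variable (F) in
noncomputable def milnorι (u : Fˣ) : MilnorKRing F :=
  RingQuot.mkRingHom (steinbergRel F) (TensorAlgebra.ι ℤ (Additive.ofMul u))

theorem milnorι_mul (u v : Fˣ) : milnorι F (u * v) = milnorι F u + milnorι F v := by
  simp only [milnorι, ofMul_mul, map_add]

@[simp]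
theorem milnorι_one : milnorι F 1 = 0 := by
  simpa using (milnorι_mul (1 : Fˣ) 1).symm

theorem milnorι_inv_add_self (u : Fˣ) : milnorι F u⁻¹ + milnorι F u = 0 := by
  rw [← milnorι_mul, inv_mul_cancel, milnorι_one]

theorem milnorι_mul_milnorι_of_add_eq_one {u v : Fˣ} (h : (u : F) + v = 1) :
    milnorι F u * milnorι F v = 0 := by
  rw [milnorι, milnorι, ← map_mul, ← map_zero (RingQuot.mkRingHom (steinbergRel F))]
  exact RingQuot.mkRingHom_rel ⟨u, v, h, rfl, rfl⟩

/-- Writing `-a = (1 - a) / (1 - a⁻¹)` reduces this to two Steinberg relations. -/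
theorem milnorι_mul_milnorι_neg_self (a : Fˣ) : milnorι F a * milnorι F (-a) = 0 := by
  obtain rfl | ha := eq_or_ne a 1
  · simp
  have ha' : (a : F) ≠ 1 := fun h => ha (Units.ext h)
  have h₁ : (1 : F) - a ≠ 0 := sub_ne_zero.mpr ha'.symm
  have h₂ : (1 : F) - (a : F)⁻¹ ≠ 0 := sub_ne_zero.mpr (by simpa [eq_comm] using ha')
  have hneg : -a = Units.mk0 _ h₁ * (Units.mk0 _ h₂)⁻¹ := by
    ext
    simp only [Units.val_neg, Units.val_mul, Units.val_inv_eq_inv_val, Units.val_mk0]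
    field_simp
    ring
  have hs₁ : milnorι F a * milnorι F (Units.mk0 _ h₁) = 0 :=
    milnorι_mul_milnorι_of_add_eq_one (by simp)
  have hs₂ : milnorι F a⁻¹ * milnorι F (Units.mk0 _ h₂) = 0 :=
    milnorι_mul_milnorι_of_add_eq_one (by simp)
  rw [hneg, milnorι_mul]
  linear_combination (norm := noncomm_ring) hs₁ + hs₂ +
    milnorι F a * milnorι_inv_add_self (Units.mk0 _ h₂) -
    milnorι_inv_add_self a * milnorι F (Units.mk0 _ h₂)

theorem milnorι_neg (a : Fˣ) : milnorι F (-a) = milnorι F (-1) + milnorι F a := by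
  rw [← milnorι_mul, neg_one_mul]

theorem milnorι_mul_comm (a b : Fˣ) :
    milnorι F a * milnorι F b = -(milnorι F b * milnorι F a) := by
  have hab := milnorι_mul_milnorι_neg_self (a * b)
  have ha := milnorι_mul_milnorι_neg_self a
  have hb := milnorι_mul_milnorι_neg_self b
  rw [milnorι_neg] at hab ha hb
  rw [milnorι_mul] at hab
  linear_combination (norm := noncomm_ring) hab - ha - hb

theorem milnorι_neg_one_mul (a : Fˣ) :
    milnorι F (-1) * milnorι F a = milnorι F a * milnorι F a := by
  have ha := milnorι_mul_milnorι_neg_self a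
  rw [milnorι_neg, mul_add] at ha
  linear_combination (norm := noncomm_ring) milnorι_mul_comm a (-1) - ha

@[simp]
theorem milnorSymbol_zero (f : Fin 0 → Fˣ) : milnorSymbol F f = 1 := by
  simp [milnorSymbol]

theorem milnorSymbol_succ {n : ℕ} (f : Fin (n + 1) → Fˣ) :
    milnorSymbol F f = milnorι F (f 0) * milnorSymbol F (Fin.tail f) := by
  simp only [milnorSymbol, milnorι, List.ofFn_succ, List.prod_cons, map_mul]
  rfl

theorem milnorSymbol_cons {n : ℕ} (a : Fˣ) (f : Fin n → Fˣ) :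
    milnorSymbol F (Fin.cons a f) = milnorι F a * milnorSymbol F f :=
  milnorSymbol_succ _

theorem milnorSymbol_const_succ (n : ℕ) (a : Fˣ) :
    milnorSymbol F (fun _ : Fin (n + 1) => a) =
      milnorι F a * milnorSymbol F (fun _ : Fin n => a) :=
  milnorSymbol_succ _

theorem milnorSymbol_neg_one_mem_milnorKNegOne (n : ℕ) :
    milnorSymbol F (fun _ : Fin n => -1) ∈ MilnorKNegOne F n :=
  AddSubgroup.mem_closure_singleton_self _

theorem milnorKNegOne_le_milnorK (n : ℕ) : MilnorKNegOne F n ≤ MilnorK F n :=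
  AddSubgroup.closure_le _ |>.2 <| Set.singleton_subset_iff.2 <|
    AddSubgroup.subset_closure ⟨_, rfl⟩

theorem two_nsmul_milnorSymbol_neg_one (n : ℕ) :
    2 • milnorSymbol F (fun _ : Fin (n + 1) => -1) = 0 := by
  rw [milnorSymbol_const_succ, two_nsmul, ← add_mul, ← milnorι_mul, neg_one_mul, neg_neg,
    milnorι_one, zero_mul]

variable [LinearOrder F]

theorem milnorSymbol_mem_milnorKPos {n : ℕ} {f : Fin n → Fˣ} (hf : ∀ i, (0 : F) < f i) :
    milnorSymbol F f ∈ MilnorKPos F n :=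
  AddSubgroup.subset_closure ⟨f, hf, rfl⟩

theorem milnorKPos_le_milnorK (n : ℕ) : MilnorKPos F n ≤ MilnorK F n :=
  AddSubgroup.closure_mono fun _ ⟨f, _, hf⟩ => ⟨f, hf⟩

theorem milnorι_mul_mem_milnorKPos {n : ℕ} {x : Fˣ} (hx : (0 : F) < x) {z : MilnorKRing F}
    (hz : z ∈ MilnorKPos F n) : milnorι F x * z ∈ MilnorKPos F (n + 1) := by
  refine AddSubgroup.mul_mem_of_mem_closure ?_ hz
  rintro _ ⟨f, hf, rfl⟩
  rw [← milnorSymbol_cons]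
  exact milnorSymbol_mem_milnorKPos (Fin.cases hx hf)

/-- Uses `{x, -1} = -{x, x}` to move the positive entry along the string of `-1`s. -/
theorem milnorι_mul_milnorSymbol_neg_one_mem_milnorKPos {x : Fˣ} (hx : (0 : F) < x) (n : ℕ) :
    milnorι F x * milnorSymbol F (fun _ : Fin n => -1) ∈ MilnorKPos F (n + 1) := by
  induction n with
  | zero => exact milnorι_mul_mem_milnorKPos hx (milnorSymbol_mem_milnorKPos finZeroElim)
  | succ n ih =>
    have h : milnorι F x * milnorι F (-1) = -(milnorι F x * milnorι F x) := by
      linear_combination (norm := noncomm_ring) milnorι_mul_comm x (-1) - milnorι_neg_one_mul x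
    -- `-` on `MilnorKRing` is `RingQuot.instNeg`, which `neg_mul` only matches once `α` is given.
    rw [milnorSymbol_const_succ, ← mul_assoc, h, neg_mul (α := MilnorKRing F), mul_assoc]
    exact neg_mem (milnorι_mul_mem_milnorKPos hx ih)

theorem milnorι_neg_one_mul_mem_sup {n : ℕ} {z : MilnorKRing F} (hz : z ∈ MilnorKPos F n) :
    milnorι F (-1) * z ∈ MilnorKNegOne F (n + 1) ⊔ MilnorKPos F (n + 1) := by
  refine AddSubgroup.mul_mem_of_mem_closure ?_ hz
  rintro _ ⟨f, hf, rfl⟩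
  cases n with
  | zero =>
    rw [Subsingleton.elim f (fun _ => -1), ← milnorSymbol_const_succ]
    exact AddSubgroup.mem_sup_left (milnorSymbol_neg_one_mem_milnorKNegOne _)
  | succ n =>
    rw [milnorSymbol_succ, ← mul_assoc, milnorι_neg_one_mul, mul_assoc]
    refine AddSubgroup.mem_sup_right (milnorι_mul_mem_milnorKPos (hf 0) ?_)
    exact milnorι_mul_mem_milnorKPos (hf 0) (milnorSymbol_mem_milnorKPos fun i => hf i.succ)

variable [IsStrictOrderedRing F]

theorem milnorι_mul_mem_sup (a : Fˣ) {n : ℕ} {z : MilnorKRing F}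
    (hz : z ∈ MilnorKNegOne F n ⊔ MilnorKPos F n) :
    milnorι F a * z ∈ MilnorKNegOne F (n + 1) ⊔ MilnorKPos F (n + 1) := by
  obtain ⟨y, hy, w, hw, rfl⟩ := AddSubgroup.mem_sup.1 hz
  have hpos {x : Fˣ} (hx : (0 : F) < x) :
      milnorι F x * (y + w) ∈ MilnorKNegOne F (n + 1) ⊔ MilnorKPos F (n + 1) := by
    refine AddSubgroup.mem_sup_right (mul_add (milnorι F x) y w ▸ add_mem ?_ ?_)
    · refine AddSubgroup.mul_mem_of_mem_closure ?_ hy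
      rintro _ rfl
      exact milnorι_mul_milnorSymbol_neg_one_mem_milnorKPos hx n
    · exact milnorι_mul_mem_milnorKPos hx hw
  rcases a.ne_zero.lt_or_gt with ha | ha
  · have hy' : milnorι F (-1) * y ∈ MilnorKNegOne F (n + 1) := by
      refine AddSubgroup.mul_mem_of_mem_closure ?_ hy
      rintro _ rfl
      rw [← milnorSymbol_const_succ]
      exact milnorSymbol_neg_one_mem_milnorKNegOne _
    rw [← neg_neg a, milnorι_neg, add_mul, mul_add]
    refine add_mem (add_mem (AddSubgroup.mem_sup_left hy') (milnorι_neg_one_mul_mem_sup hw)) ?_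
    exact hpos (by simpa using ha)
  · exact hpos ha

theorem milnorK_le_milnorKNegOne_sup_milnorKPos (n : ℕ) :
    MilnorK F n ≤ MilnorKNegOne F n ⊔ MilnorKPos F n := by
  refine AddSubgroup.closure_le _ |>.2 ?_
  rintro _ ⟨f, rfl⟩
  induction n with
  | zero =>
    rw [Subsingleton.elim f (fun _ => -1)]
    exact AddSubgroup.mem_sup_left (milnorSymbol_neg_one_mem_milnorKNegOne _)
  | succ n ih =>
    rw [milnorSymbol_succ]
    exact milnorι_mul_mem_sup _ (ih _)

theorem milnorKNegOne_sup_milnorKPos (n : ℕ) :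
    MilnorKNegOne F n ⊔ MilnorKPos F n = MilnorK F n :=
  le_antisymm (sup_le (milnorKNegOne_le_milnorK n) (milnorKPos_le_milnorK n)) (milnorK_le_milnorKNegOne_sup_milnorKPos n)

variable (F) in
noncomputable def unitsSignParity : Additive Fˣ →+ ZMod 2 where
  toFun u := if (u.toMul : F) < 0 then 1 else 0
  map_zero' := by simp
  map_add' u v := by
    rcases u.toMul.ne_zero.lt_or_gt with hu | hu <;>
      rcases v.toMul.ne_zero.lt_or_gt with hv | hv <;>
      simp only [toMul_add, Units.val_mul, mul_neg_iff, hu, hv, hu.not_gt, hv.not_gt, and_self,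
        and_false, false_and, or_false, false_or, if_true, if_false] <;> rfl

theorem unitsSignParity_ofMul (u : Fˣ) :
    unitsSignParity F (Additive.ofMul u) = if (u : F) < 0 then 1 else 0 := rfl

variable (F) in
noncomputable def milnorSignParity : MilnorKRing F →+* ZMod 2 :=
  RingQuot.lift
    ⟨(TensorAlgebra.lift ℤ (unitsSignParity F).toIntLinearMap).toRingHom, by
      rintro _ _ ⟨u, v, huv, rfl, rfl⟩
      have : ¬ ((u : F) < 0 ∧ (v : F) < 0) := fun h => by linarith [h.1, h.2]
      simp only [AlgHom.toRingHom_eq_coe, RingHom.coe_coe, map_mul, TensorAlgebra.lift_ι_apply,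
        AddMonoidHom.coe_toIntLinearMap, unitsSignParity_ofMul, map_zero]
      split_ifs <;> simp_all⟩

theorem milnorSignParity_milnorι (u : Fˣ) :
    milnorSignParity F (milnorι F u) = if (u : F) < 0 then 1 else 0 := by
  simp [milnorSignParity, milnorι, unitsSignParity_ofMul]

theorem milnorSignParity_milnorSymbol_neg_one (n : ℕ) :
    milnorSignParity F (milnorSymbol F (fun _ : Fin n => -1)) = 1 := by
  induction n with
  | zero => simp
  | succ n ih => simp [milnorSymbol_const_succ, ih, milnorSignParity_milnorι]

theorem milnorKPos_le_ker_milnorSignParity (n : ℕ) :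
    MilnorKPos F (n + 1) ≤ (milnorSignParity F).toAddMonoidHom.ker := by
  refine AddSubgroup.closure_le _ |>.2 ?_
  rintro _ ⟨f, hf, rfl⟩
  simp [AddMonoidHom.mem_ker, milnorSymbol_succ, milnorSignParity_milnorι, (hf 0).not_gt]

theorem milnorKNegOne_inf_milnorKPos (n : ℕ) :
    MilnorKNegOne F (n + 1) ⊓ MilnorKPos F (n + 1) = ⊥ := by
  refine eq_bot_iff.2 fun x ⟨hneg, hpos⟩ => ?_
  obtain ⟨k, rfl⟩ := AddSubgroup.mem_closure_singleton.1 hneg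
  have hk : ((k : ℤ) : ZMod 2) = 0 := by
    simpa [milnorSignParity_milnorSymbol_neg_one] using
      milnorKPos_le_ker_milnorSignParity n hpos
  obtain ⟨j, rfl⟩ := (ZMod.intCast_eq_zero_iff_even).1 hk
  rw [AddSubgroup.mem_bot, add_zsmul, ← smul_add, ← two_nsmul, two_nsmul_milnorSymbol_neg_one,
    smul_zero]

theorem exists_pos_unit_mul_self_eq {x : Fˣ} {a : F} (ha : a ^ 2 = x) :
    ∃ q : Fˣ, (0 : F) < q ∧ q * q = x := by
  have ha₀ : a ≠ 0 := by rintro rfl; simp [eq_comm] at ha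
  exact ⟨Units.mk0 |a| (abs_ne_zero.2 ha₀), abs_pos.2 ha₀,
    Units.ext (by simp [← sq, sq_abs, ha])⟩

theorem exists_eq_two_nsmul_of_mem_milnorKPos (hF : ∀ x : F, 0 < x → ∃ a : F, a ^ 2 = x)
    {n : ℕ} {z : MilnorKRing F} (hz : z ∈ MilnorKPos F (n + 1)) :
    ∃ w ∈ MilnorKPos F (n + 1), z = 2 • w := by
  suffices MilnorKPos F (n + 1) ≤ (MilnorKPos F (n + 1)).map (nsmulAddMonoidHom 2) by
    obtain ⟨w, hw, rfl⟩ := this hz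
    exact ⟨w, hw, rfl⟩
  refine AddSubgroup.closure_le _ |>.2 ?_
  rintro _ ⟨f, hf, rfl⟩
  obtain ⟨a, ha⟩ := hF _ (hf 0)
  obtain ⟨q, hq, hqq⟩ := exists_pos_unit_mul_self_eq ha
  refine ⟨milnorι F q * milnorSymbol F (Fin.tail f),
    milnorι_mul_mem_milnorKPos hq (milnorSymbol_mem_milnorKPos fun i => hf i.succ), ?_⟩
  rw [nsmulAddMonoidHom_apply, milnorSymbol_succ f, ← hqq, milnorι_mul, add_mul, two_nsmul]

theorem two_nsmul_mem_milnorKPos {n : ℕ} {w : MilnorKRing F} (hw : w ∈ MilnorK F (n + 1)) :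
    2 • w ∈ MilnorKPos F (n + 1) := by
  rw [← milnorKNegOne_sup_milnorKPos] at hw
  obtain ⟨y, hy, p, hp, rfl⟩ := AddSubgroup.mem_sup.1 hw
  obtain ⟨k, rfl⟩ := AddSubgroup.mem_closure_singleton.1 hy
  rw [smul_add, smul_comm, two_nsmul_milnorSymbol_neg_one, smul_zero, zero_add]
  exact AddSubgroup.nsmul_mem _ hp 2

end

/-- For a real quadratically closed field `R`, the Milnor K-group `K_n^M(R)` is the direct
sum of the subgroup generated by `{-1, …, -1}` and the subgroup `K_n^M(R)⁰` generated by
symbols of positive elements; `K_n^M(R)⁰` is 2-divisible, and `K_n^M(R)⁰ = 2·K_n^M(R)`. -/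
theorem milnorK_decomposition
    (hRQC : ∀ x : R, 0 < x → ∃ a : R, a ^ 2 = x) (n : ℕ) (hn : 1 ≤ n) :
    (MilnorKNegOne R n ⊔ MilnorKPos R n = MilnorK R n ∧
      MilnorKNegOne R n ⊓ MilnorKPos R n = ⊥) ∧
    (∀ z ∈ MilnorKPos R n, ∃ w ∈ MilnorKPos R n, z = 2 • w) ∧
    (∀ z, z ∈ MilnorKPos R n ↔ ∃ w ∈ MilnorK R n, z = 2 • w) := by
  obtain ⟨n, rfl⟩ := Nat.exists_eq_add_of_le' hn
  have hdiv (z) (hz : z ∈ MilnorKPos R (n + 1)) := exists_eq_two_nsmul_of_mem_milnorKPos hRQC hz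
  refine ⟨⟨milnorKNegOne_sup_milnorKPos _, milnorKNegOne_inf_milnorKPos n⟩, hdiv,
    fun z => ⟨fun hz => ?_, ?_⟩⟩
  · obtain ⟨w, hw, rfl⟩ := hdiv z hz
    exact ⟨w, milnorKPos_le_milnorK _ hw, rfl⟩
  · rintro ⟨w, hw, rfl⟩
    exact two_nsmul_mem_milnorKPos hw
end
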